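/- Let g₁,…,gₘ be quasi-exponentials, i.e., each gᵢ(x) = αᵢˣ pᵢ(x) with αᵢ ∈ ℂ* and pᵢ a polynomial. Then the discrete Wronskian Wr(g₁,…,gₘ) is identically zero if and only if g₁,…,gₘ are linearly dependent over ℂ. -/

import Mathlib

/-!
Induct on `m`. Write `gᵢ(x) = e^{x βᵢ} pᵢ(x)` with `βᵢ = log αᵢ`. If `g₁, …, gₘ₊₁` are independent,
then by induction `D = Wr(g₁, …, gₘ)` is not identically zero, and `D(x) = e^{x Σ βᵢ} W(x)` for a
nonzero polynomial `W`. Suppose `Wr(g₁, …, gₘ₊₁) ≡ 0`. Wherever `D(x) ≠ 0` the last function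
satisfies `gₘ₊₁(x + j) = Σₖ λₖ(x) gₖ(x + j)` for `j = 0, …, m`, with the Cramer coefficients
`λₖ = Dₖ / D`, where `Dₖ` is the Wronskian with `gₖ` replaced by `gₘ₊₁`. The systems at `x` and
`x + 1` share `m` equations, so `λₖ` is `1`-periodic. But `λₖ(x) = e^{x γ} Qₖ(x) / W(x)` with
`γ = βₘ₊₁ - βₖ`; comparing leading coefficients, periodicity forces `Qₖ = 0` or `e^γ = 1`, i.e.
`γ = 0` since both `β` are values of the same branch of `log`, and then the periodic rational
function `Qₖ / W` is constant. Hence `gₘ₊₁ = Σ cₖ gₖ` off the zeros of `W`, and everywhere by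
continuity.
-/

/-- The discrete Wronskian of functions `g 0, …, g (m-1)`:
`dWr g x = det ((g i (x + j - 1))_{i,j})`. -/
noncomputable def dWr {m : ℕ} (g : Fin m → ℂ → ℂ) (x : ℂ) : ℂ :=
  Matrix.det (Matrix.of fun i j : Fin m => g i (x + (j : ℕ)))

open Polynomial Matrix Complex

theorem Matrix.det_mul_apply_eq_det_updateRow {R n : Type*} [CommRing R] [Fintype n]
    [DecidableEq n] (B : Matrix n n R) (c : n → R) (k : n) :
    B.det * c k = (B.updateRow k (c ᵥ* B)).det := by
  rw [← cramer_transpose_apply, ← mulVec_transpose, cramer_eq_adjugate_mulVec, mulVec_mulVec,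
    adjugate_mul, det_transpose, smul_mulVec, one_mulVec, Pi.smul_apply, smul_eq_mul]

theorem Matrix.exists_sum_smul_eq_last_of_det_eq_zero {K : Type*} [Field K] {m : ℕ}
    (M : Matrix (Fin (m + 1)) (Fin (m + 1)) K) (hM : M.det = 0)
    (hB : (M.submatrix Fin.castSucc Fin.castSucc).det ≠ 0) :
    ∃ c : Fin m → K, ∑ k, c k • M k.castSucc = M (Fin.last m) := by
  have hdep : ¬ LinearIndependent K (Fin.snoc (Fin.init M.row) (M.row (Fin.last m))) := by
    rw [Fin.snoc_init_self, linearIndependent_rows_iff_isUnit, isUnit_iff_isUnit_det, hM]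
    exact not_isUnit_zero
  have hinit : LinearIndependent K (Fin.init M.row) := by
    refine LinearIndependent.of_comp (LinearMap.funLeft K K Fin.castSucc) ?_
    exact linearIndependent_rows_iff_isUnit.2 ((isUnit_iff_isUnit_det _).2 hB.isUnit)
  rw [linearIndependent_finSnoc, not_and_not_right] at hdep
  exact (Submodule.mem_span_range_iff_exists_fun K).1 (hdep hinit)

theorem Polynomial.exists_forall_eval_add_natCast_ne_zero {P : ℂ[X]} (hP : P ≠ 0) :
    ∃ x₀ : ℂ, ∀ n : ℕ, P.eval (x₀ + n) ≠ 0 := by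
  obtain ⟨b, hb⟩ := ((finite_setOfPred_isRoot hP).image re).bddAbove
  refine ⟨b + 1, fun n hn => ?_⟩
  have : b + 1 + n ≤ b := hb ⟨_, hn, by simp⟩
  linarith [n.cast_nonneg (α := ℝ)]

theorem Polynomial.exists_eq_C_mul_of_comp_X_add_one {P Q : ℂ[X]} (hP : P ≠ 0)
    (h : P.comp (X + 1) * Q = P * Q.comp (X + 1)) : ∃ c : ℂ, Q = C c * P := by
  obtain ⟨x₀, hx₀⟩ := exists_forall_eval_add_natCast_ne_zero hP
  have hshift (x : ℂ) : P.eval (x + 1) * Q.eval x = P.eval x * Q.eval (x + 1) := by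
    simpa using congrArg (eval x) h
  have horbit (n : ℕ) : P.eval x₀ * Q.eval (x₀ + n) = Q.eval x₀ * P.eval (x₀ + n) := by
    induction n with
    | zero => simp [mul_comm]
    | succ n ih =>
      refine mul_right_cancel₀ (hx₀ n) ?_
      push_cast
      rw [← add_assoc]
      linear_combination P.eval (x₀ + n + 1) * ih - P.eval x₀ * hshift (x₀ + n)
  have hx₀' : P.eval x₀ ≠ 0 := by simpa using hx₀ 0
  refine ⟨Q.eval x₀ / P.eval x₀, ?_⟩
  have hcross : C (P.eval x₀) * Q = C (Q.eval x₀) * P := by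
    refine eq_of_infinite_eval_eq _ _
      ((Set.infinite_range_of_injective (f := fun n : ℕ => x₀ + n) fun a b hab => ?_).mono ?_)
    · exact_mod_cast add_left_cancel hab
    · rintro _ ⟨n, rfl⟩
      simpa using horbit n
  refine mul_left_cancel₀ (C_ne_zero.2 hx₀') ?_
  rw [hcross, ← mul_assoc, ← C_mul, mul_div_cancel₀ _ hx₀']

theorem Polynomial.leadingCoeff_comp_X_add_one (P : ℂ[X]) :
    (P.comp (X + 1)).leadingCoeff = P.leadingCoeff := by
  rw [← C_1, leadingCoeff_comp (by rw [natDegree_X_add_C]; exact one_ne_zero), leadingCoeff_X_add_C,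
    one_pow, mul_one]

noncomputable def quasiExp (β : ℂ) (p : ℂ[X]) (x : ℂ) : ℂ :=
  exp (x * β) * p.eval x

section QuasiExp

variable {β : ℂ} {p : ℂ[X]}

theorem quasiExp_add (β : ℂ) (p : ℂ[X]) (x a : ℂ) :
    quasiExp β p (x + a) = quasiExp β (C (exp (a * β)) * p.comp (X + C a)) x := by
  simp only [quasiExp, eval_mul, eval_C, eval_comp, eval_add, eval_X, add_mul, exp_add]
  ring

theorem continuous_quasiExp : Continuous (quasiExp β p) := by
  unfold quasiExp
  fun_prop

theorem quasiExp_ne_zero_iff {x : ℂ} : quasiExp β p x ≠ 0 ↔ p.eval x ≠ 0 := by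
  simp [quasiExp, exp_ne_zero]

theorem det_quasiExp {n : Type*} [Fintype n] [DecidableEq n] (β : n → ℂ)
    (P : Matrix n n ℂ[X]) (x : ℂ) :
    (of fun i j => quasiExp (β i) (P i j) x).det = quasiExp (∑ i, β i) P.det x := by
  have := det_mul_column (fun i => exp (x * β i)) (of fun i j => (P i j).eval x)
  simp only [of_apply] at this
  rw [quasiExp, ← coe_evalRingHom, RingHom.map_det, Finset.mul_sum, exp_sum]
  exact this

theorem exists_dWr_quasiExp_eq {m : ℕ} (β : Fin m → ℂ) (p : Fin m → ℂ[X]) :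
    ∃ P : ℂ[X], dWr (fun i => quasiExp (β i) (p i)) = quasiExp (∑ i, β i) P := by
  refine ⟨(of fun i j : Fin m => C (exp ((j : ℕ) * β i)) * (p i).comp (X + C ((j : ℕ) : ℂ))).det,
    funext fun x => ?_⟩
  simp only [dWr, quasiExp_add, ← det_quasiExp, of_apply]

theorem dense_setOf_quasiExp_ne_zero (hp : p ≠ 0) : Dense {x | quasiExp β p x ≠ 0} := by
  simpa [quasiExp_ne_zero_iff, Set.compl_ofPred] using
    (finite_setOfPred_isRoot hp).countable.dense_compl ℂ

end QuasiExp

theorem exists_quasiExp_eq_smul_of_periodic {a γ : ℂ} {P Q : ℂ[X]} (hP : P ≠ 0)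
    (hγ : exp γ = 1 → γ = 0)
    (h : ∀ x, P.eval x ≠ 0 →
      quasiExp a P (x + 1) * quasiExp (a + γ) Q x = quasiExp a P x * quasiExp (a + γ) Q (x + 1)) :
    ∃ c : ℂ, quasiExp (a + γ) Q = c • quasiExp a P := by
  have hpoly : P.comp (X + 1) * Q = C (exp γ) * P * Q.comp (X + 1) := by
    refine eq_of_infinite_eval_eq _ _ (((finite_setOfPred_isRoot hP).infinite_compl).mono ?_)
    intro x hx
    have hexp : exp (x * a) * exp (x * (a + γ)) * exp a ≠ 0 := by simp [exp_ne_zero]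
    refine mul_left_cancel₀ hexp ?_
    have := h x hx
    simp only [quasiExp, add_mul, one_mul, exp_add] at this
    simp only [eval_mul, eval_comp, eval_add, eval_X, eval_one, eval_C]
    linear_combination this
  by_cases hQ : Q = 0
  · exact ⟨0, funext fun x => by simp [quasiExp, hQ]⟩
  have hγ1 : exp γ = 1 := by
    have := congrArg leadingCoeff hpoly
    simp only [leadingCoeff_mul, leadingCoeff_C, leadingCoeff_comp_X_add_one] at this
    refine mul_right_cancel₀
      (mul_ne_zero (leadingCoeff_ne_zero.2 hP) (leadingCoeff_ne_zero.2 hQ)) ?_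
    linear_combination -this
  obtain rfl := hγ hγ1
  obtain ⟨c, rfl⟩ := exists_eq_C_mul_of_comp_X_add_one hP (by simpa [hγ1] using hpoly)
  refine ⟨c, funext fun x => ?_⟩
  simp only [quasiExp, add_zero, eval_mul, eval_C, Pi.smul_apply, smul_eq_mul]
  ring

noncomputable def dWrMatrix {m : ℕ} (g : Fin m → ℂ → ℂ) (x : ℂ) : Matrix (Fin m) (Fin m) ℂ :=
  of fun i j => g i (x + (j : ℕ))

section DiscreteWronskian

variable {m : ℕ} {f : Fin m → ℂ → ℂ} {h : ℂ → ℂ} {x : ℂ}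

theorem dWr_eq_det (g : Fin m → ℂ → ℂ) (x : ℂ) : dWr g x = (dWrMatrix g x).det := rfl

theorem dWrMatrix_update (k : Fin m) :
    dWrMatrix (Function.update f k h) x = (dWrMatrix f x).updateRow k fun j => h (x + (j : ℕ)) := by
  ext i j
  rcases eq_or_ne i k with rfl | hik <;> simp [dWrMatrix, updateRow_apply, *]

theorem dWrMatrix_snoc_submatrix :
    (dWrMatrix (Fin.snoc f h) x).submatrix Fin.castSucc Fin.castSucc = dWrMatrix f x := by
  ext i j
  simp [dWrMatrix]

theorem dWr_eq_zero_of_not_linearIndependent {g : Fin m → ℂ → ℂ}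
    (hg : ¬ LinearIndependent ℂ g) (x : ℂ) : dWr g x = 0 := by
  obtain ⟨c, hc, i, hi⟩ := Fintype.not_linearIndependent_iff.1 hg
  refine exists_vecMul_eq_zero_iff.1 ⟨c, fun h0 => hi (congrFun h0 i), funext fun j => ?_⟩
  simpa [vecMul, dotProduct] using congrFun hc (x + (j : ℕ))

theorem dWr_mul_eq_sum_dWr_update (H : dWr (Fin.snoc f h) x = 0) (hx : dWr f x ≠ 0)
    {j : ℕ} (hj : j ≤ m) :
    dWr f x * h (x + j) = ∑ k, dWr (Function.update f k h) x * f k (x + j) := by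
  obtain ⟨c, hc⟩ := exists_sum_smul_eq_last_of_det_eq_zero (dWrMatrix (Fin.snoc f h) x) H
    (by rwa [dWrMatrix_snoc_submatrix])
  have hrel (j : Fin (m + 1)) : ∑ k, c k * f k (x + (j : ℕ)) = h (x + (j : ℕ)) := by
    simpa [dWrMatrix] using congrFun hc j
  have hcramer (k : Fin m) : dWr f x * c k = dWr (Function.update f k h) x := by
    have hv : c ᵥ* dWrMatrix f x = fun j : Fin m => h (x + (j : ℕ)) := funext fun j => by
      simpa [vecMul, dotProduct, dWrMatrix, mul_comm] using hrel j.castSucc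
    rw [dWr_eq_det, det_mul_apply_eq_det_updateRow, hv, dWr_eq_det, dWrMatrix_update]
  simp only [← hcramer, mul_assoc, ← Finset.mul_sum]
  simpa using congrArg (dWr f x * ·) (hrel ⟨j, by omega⟩).symm

theorem dWr_add_one_mul_dWr_update (H : dWr (Fin.snoc f h) x = 0) (hx : dWr f x ≠ 0)
    (k : Fin m) : dWr f (x + 1) * dWr (Function.update f k h) x
      = dWr f x * dWr (Function.update f k h) (x + 1) := by
  have hv : (fun i => dWr (Function.update f i h) x) ᵥ* dWrMatrix f (x + 1)
      = dWr f x • fun j : Fin m => h (x + 1 + (j : ℕ)) := funext fun j => by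
    have := dWr_mul_eq_sum_dWr_update H hx (j := j + 1) j.isLt
    simp only [vecMul, dotProduct, dWrMatrix, of_apply, Pi.smul_apply, smul_eq_mul]
    push_cast at this ⊢
    rw [add_comm (j : ℂ), ← add_assoc] at this
    exact this.symm
  rw [dWr_eq_det f (x + 1),
    det_mul_apply_eq_det_updateRow _ (fun i => dWr (Function.update f i h) x) k, hv,
    det_updateRow_smul, ← dWrMatrix_update, ← dWr_eq_det]

theorem sum_smul_eq_of_dWr_update_eq_smul (hf : ∀ k, Continuous (f k)) (hh : Continuous h)
    (hD : Dense {x | dWr f x ≠ 0}) (H : ∀ x, dWr (Fin.snoc f h) x = 0) {c : Fin m → ℂ}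
    (hc : ∀ k, dWr (Function.update f k h) = c k • dWr f) : ∑ k, c k • f k = h := by
  refine Continuous.ext_on hD (by rw [Finset.sum_fn]; fun_prop) hh
    fun x hx => mul_left_cancel₀ hx ?_
  have := dWr_mul_eq_sum_dWr_update (H x) hx (j := 0) (Nat.zero_le m)
  simp only [hc, Nat.cast_zero, add_zero, Pi.smul_apply, smul_eq_mul] at this
  simp only [Finset.sum_apply, Pi.smul_apply, smul_eq_mul, Finset.mul_sum, this]
  ring_nf

end DiscreteWronskian

section QuasiExpFamily

variable {m : ℕ} {β : Fin m → ℂ} {p : Fin m → ℂ[X]} {b : ℂ} {q : ℂ[X]}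

theorem exists_dWr_update_quasiExp_eq_smul (hb : ∀ k, exp b = exp (β k) → b = β k) {W : ℂ[X]}
    (hW0 : W ≠ 0) (hW : dWr (fun i => quasiExp (β i) (p i)) = quasiExp (∑ i, β i) W)
    (H : ∀ x, dWr (Fin.snoc (fun i => quasiExp (β i) (p i)) (quasiExp b q)) x = 0) (k : Fin m) :
    ∃ c : ℂ, dWr (Function.update (fun i => quasiExp (β i) (p i)) k (quasiExp b q))
      = c • dWr (fun i => quasiExp (β i) (p i)) := by
  obtain ⟨Q, hQ⟩ := exists_dWr_quasiExp_eq (Function.update β k b) (Function.update p k q)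
  have hupdate : Function.update (fun i => quasiExp (β i) (p i)) k (quasiExp b q)
      = fun i => quasiExp (Function.update β k b i) (Function.update p k q i) :=
    funext fun i => (Function.apply_update₂ (fun _ => quasiExp) β p k b q i).symm
  have hsum : ∑ i, Function.update β k b i = ∑ i, β i + (b - β k) := by
    rw [Finset.sum_update_of_mem (Finset.mem_univ k), Finset.sdiff_singleton_eq_erase,
      Finset.sum_erase_eq_sub (Finset.mem_univ k)]
    ring
  have hper (x : ℂ) (hx : dWr (fun i => quasiExp (β i) (p i)) x ≠ 0) :=
    dWr_add_one_mul_dWr_update (H x) hx k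
  rw [hupdate, hQ, hsum, hW] at hper ⊢
  refine exists_quasiExp_eq_smul_of_periodic hW0 (fun hγ => ?_)
    fun x hx => hper x (quasiExp_ne_zero_iff.2 hx)
  rw [exp_sub, div_eq_one_iff_eq (exp_ne_zero _)] at hγ
  rw [hb k hγ, sub_self]

end QuasiExpFamily

theorem exists_dWr_quasiExp_ne_zero {m : ℕ} (β : Fin m → ℂ) (hβ : Set.InjOn exp (Set.range β))
    (p : Fin m → ℂ[X]) (hli : LinearIndependent ℂ fun i => quasiExp (β i) (p i)) :
    ∃ x, dWr (fun i => quasiExp (β i) (p i)) x ≠ 0 := by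
  induction m with
  | zero => exact ⟨0, by simp [dWr]⟩
  | succ m ih =>
    set f : Fin m → ℂ → ℂ := fun k => quasiExp (β k.castSucc) (p k.castSucc)
    set h := quasiExp (β (Fin.last m)) (p (Fin.last m))
    have hsnoc : (fun i => quasiExp (β i) (p i)) = Fin.snoc f h := (Fin.snoc_init_self _).symm
    rw [hsnoc] at hli ⊢
    rw [linearIndependent_finSnoc] at hli
    obtain ⟨x₀, hx₀⟩ : ∃ x, dWr f x ≠ 0 :=
      ih _ (hβ.mono (Set.range_comp_subset_range Fin.castSucc β)) _ hli.1
    by_contra! H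
    obtain ⟨W, hW⟩ : ∃ W, dWr f = quasiExp (∑ i : Fin m, β i.castSucc) W :=
      exists_dWr_quasiExp_eq _ _
    have hW0 : W ≠ 0 := by
      rintro rfl
      exact hx₀ (by simp [hW, quasiExp])
    choose c hc using exists_dWr_update_quasiExp_eq_smul
      (fun k hk => hβ ⟨_, rfl⟩ ⟨_, rfl⟩ hk) hW0 hW H
    refine hli.2 ((Submodule.mem_span_range_iff_exists_fun ℂ).2 ⟨c, ?_⟩)
    refine sum_smul_eq_of_dWr_update_eq_smul (fun k => continuous_quasiExp) continuous_quasiExp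
      ?_ H hc
    rw [hW]
    exact dense_setOf_quasiExp_ne_zero hW0

/-- If `g₁,…,gₘ` are quasi-exponentials, i.e. each `gᵢ(x) = αᵢˣ pᵢ(x)` with
`αᵢ ∈ ℂ*` and `pᵢ` a polynomial (where `αˣ = exp(x log α)`), then the discrete Wronskian
`Wr(g₁,…,gₘ)` vanishes identically if and only if `g₁,…,gₘ` are linearly dependent over `ℂ`. -/
theorem stmt3 {m : ℕ} (g : Fin m → ℂ → ℂ)
    (hg : ∀ i, ∃ (α : ℂ) (p : Polynomial ℂ), α ≠ 0 ∧
      ∀ x : ℂ, g i x = Complex.exp (x * Complex.log α) * p.eval x) :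
    (∀ x : ℂ, dWr g x = 0) ↔ ¬ LinearIndependent ℂ g := by
  refine ⟨fun H hli => ?_, dWr_eq_zero_of_not_linearIndependent⟩
  choose α p hα hp using hg
  obtain rfl : g = fun i => quasiExp (log (α i)) (p i) := funext fun i => funext (hp i)
  refine (exists_dWr_quasiExp_ne_zero _ ?_ p hli).elim fun x hx => hx (H x)
  rintro _ ⟨i, rfl⟩ _ ⟨j, rfl⟩ hij
  simp only [exp_log (hα i), exp_log (hα j)] at hij
  exact congrArg log hij
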